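/- arXiv:2203.13559 — 2 statements merged into one kernel-verified Lean document; each statement's English description precedes it below -/
import Mathlib

section
/- Let Y be a real-valued random variable taking values in a bounded interval [a,b] and let G be a sub-σ-algebra with E[Y | G] = 0 almost surely. Then for every real x, log E[exp(xY) | G] ≤ (b−a)²x²/8 almost surely. -/
open Real

private lemma hoeffding_aux {p : ℝ} (hp0 : 0 ≤ p) (hp1 : p ≤ 1) (t : ℝ) :
    (1 - p) + p * Real.exp t ≤ Real.exp (p * t + t ^ 2 / 8) := by
  rcases eq_or_lt_of_le hp0 with h0 | h0
  · simp only [← h0, sub_zero, zero_mul, add_zero, zero_add]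
    calc (1:ℝ) = Real.exp 0 := by simp
    _ ≤ _ := by apply Real.exp_le_exp.mpr; positivity
  -- p > 0 case
  set D : ℝ → ℝ := fun t => (1 - p) + p * Real.exp t with hD
  have hDpos : ∀ s, 0 < D s := fun s => by
    have := Real.exp_pos s
    have : 0 < p * Real.exp s := mul_pos h0 (Real.exp_pos s)
    simp only [hD]; nlinarith
  set F : ℝ → ℝ := fun t => p * t + t ^ 2 / 8 - Real.log (D t) with hF
  set Gf : ℝ → ℝ := fun t => p + t / 4 - p * Real.exp t / D t with hGf
  have hDderiv : ∀ s, HasDerivAt D (p * Real.exp s) s := fun s => by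
    exact ((Real.hasDerivAt_exp s).const_mul p).const_add (1 - p)
  have hFderiv : ∀ s, HasDerivAt F (Gf s) s := fun s => by
    have h1 : HasDerivAt (fun t : ℝ => p * t) p s := by
      simpa using (hasDerivAt_id s).const_mul p
    have h2 : HasDerivAt (fun t : ℝ => t ^ 2 / 8) (2 * s / 8) s := by
      simpa using (hasDerivAt_pow 2 s).div_const 8
    have h3 : HasDerivAt (fun t => Real.log (D t)) (p * Real.exp s / D s) s :=
      (hDderiv s).log (hDpos s).ne'
    have := (h1.add h2).sub h3
    exact this.congr_deriv (by show _ = p + s / 4 - p * Real.exp s / D s; ring)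
  have hGderiv : ∀ s, HasDerivAt Gf (1 / 4 - (p * Real.exp s * D s - p * Real.exp s * (p * Real.exp s)) / (D s) ^ 2) s := fun s => by
    have h1 : HasDerivAt (fun t : ℝ => p + t / 4) (1 / 4) s := by
      simpa using ((hasDerivAt_id s).div_const 4).const_add p
    have h2 : HasDerivAt (fun t => p * Real.exp t / D t)
        ((p * Real.exp s * D s - p * Real.exp s * (p * Real.exp s)) / (D s) ^ 2) s :=
      ((Real.hasDerivAt_exp s).const_mul p).div (hDderiv s) (hDpos s).ne'
    exact h1.sub h2
  have hGmono : Monotone Gf := by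
    apply monotone_of_deriv_nonneg (fun s => (hGderiv s).differentiableAt)
    intro s
    rw [(hGderiv s).deriv]
    rw [sub_nonneg, div_le_iff₀ (pow_pos (hDpos s) 2)]
    have hDs : D s = (1 - p) + p * Real.exp s := rfl
    nlinarith [sq_nonneg (p * Real.exp s - (1 - p)), Real.exp_pos s, hDpos s]
  have hG0 : Gf 0 = 0 := by
    simp only [hGf, hD, Real.exp_zero, mul_one]
    field_simp
    ring
  have hFcont : Continuous F := by
    have : Differentiable ℝ F := fun s => (hFderiv s).differentiableAt
    exact this.continuous
  have hF0 : F 0 = 0 := by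
    simp [hF, hD]
  have key : ∀ s, 0 ≤ F s := by
    intro s
    rcases le_total 0 s with hs | hs
    · have : MonotoneOn F (Set.Ici 0) := by
        apply monotoneOn_of_deriv_nonneg (convex_Ici 0) hFcont.continuousOn
        · intro x _; exact (hFderiv x).differentiableAt.differentiableWithinAt
        · intro x hx
          rw [(hFderiv x).deriv, ← hG0]
          exact hGmono (le_of_lt (by simpa using hx))
      have := this (Set.mem_Ici.mpr le_rfl) (Set.mem_Ici.mpr hs) hs
      linarith [hF0 ▸ this]
    · have : AntitoneOn F (Set.Iic 0) := by
        apply antitoneOn_of_deriv_nonpos (convex_Iic 0) hFcont.continuousOn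
        · intro x _; exact (hFderiv x).differentiableAt.differentiableWithinAt
        · intro x hx
          rw [(hFderiv x).deriv, ← hG0]
          exact hGmono (le_of_lt (by simpa using hx))
      have := this (Set.mem_Iic.mpr hs) (Set.mem_Iic.mpr le_rfl) hs
      linarith [hF0 ▸ this]
  have hlog : Real.log (D t) ≤ p * t + t ^ 2 / 8 := by
    have := key t; simp only [hF] at this; linarith
  calc D t = Real.exp (Real.log (D t)) := (Real.exp_log (hDpos t)).symm
  _ ≤ Real.exp (p * t + t ^ 2 / 8) := Real.exp_le_exp.mpr hlog

open MeasureTheory ProbabilityTheory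

/-- Conditional Hoeffding's lemma: if `Y ∈ [a,b]` a.s. and `E[Y | G] = 0` a.s., then for every
real `x`, `log E[exp (x Y) | G] ≤ (b - a)^2 x^2 / 8` almost surely. -/
theorem conditional_hoeffding_lemma
    {Ω : Type*} {mΩ : MeasurableSpace Ω} {μ : Measure Ω} [IsProbabilityMeasure μ]
    (G : MeasurableSpace Ω) (hG : G ≤ mΩ)
    (Y : Ω → ℝ) (a b : ℝ)
    (hY : ∀ᵐ ω ∂μ, Y ω ∈ Set.Icc a b)
    (hcond : μ[Y|G] =ᵐ[μ] 0) :
    ∀ x : ℝ, ∀ᵐ ω ∂μ,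
      Real.log ((μ[fun ω => Real.exp (x * Y ω)|G]) ω) ≤ (b - a) ^ 2 * x ^ 2 / 8 := by
  intro x
  by_cases hx : x = 0
  · subst hx
    simp only [zero_mul, Real.exp_zero]
    rw [condExp_const hG (1 : ℝ)]
    filter_upwards with ω
    simp
  by_cases hint : Integrable (fun ω => Real.exp (x * Y ω)) μ
  swap
  · rw [condExp_of_not_integrable hint]
    filter_upwards with ω
    simp only [Pi.zero_apply, Real.log_zero]
    positivity
  -- Y is a.e. strongly measurable
  have hYm : @AEStronglyMeasurable Ω ℝ _ mΩ mΩ Y μ := by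
    have hYeq : Y = fun ω => Real.log (Real.exp (x * Y ω)) / x := by
      funext ω; rw [Real.log_exp]; field_simp
    rw [hYeq]
    exact ((Real.measurable_log.comp_aemeasurable
      hint.aestronglyMeasurable.aemeasurable).div_const x).aestronglyMeasurable
  have hYint : Integrable Y μ := by
    refine Integrable.mono' (integrable_const (max |a| |b|)) hYm ?_
    filter_upwards [hY] with ω hω
    rw [Real.norm_eq_abs, abs_le]
    constructor
    · have := neg_abs_le a; have := le_max_left |a| |b|; linarith [hω.1]
    · have := le_abs_self b; have := le_max_right |a| |b|; linarith [hω.2]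
  -- a ≤ 0 ≤ b
  have hEY : ∫ ω, Y ω ∂μ = 0 := by
    rw [← integral_condExp hG (f := Y)]
    rw [integral_congr_ae hcond]
    simp
  have ha0 : a ≤ 0 := by
    have h1 : ∫ (_ : Ω), a ∂μ ≤ ∫ ω, Y ω ∂μ :=
      integral_mono_ae (integrable_const a) hYint (by filter_upwards [hY] with ω hω using hω.1)
    simpa [hEY] using h1
  have hb0 : 0 ≤ b := by
    have h1 : ∫ ω, Y ω ∂μ ≤ ∫ (_ : Ω), b ∂μ :=
      integral_mono_ae hYint (integrable_const b) (by filter_upwards [hY] with ω hω using hω.2)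
    simpa [hEY] using h1
  rcases eq_or_lt_of_le (ha0.trans hb0) with hab | hab
  · -- a = b, hence a = b = 0 and Y = 0 a.e.
    have ha : a = 0 := le_antisymm ha0 (by rw [hab]; exact hb0)
    have hbz : b = 0 := by rw [← hab]; exact ha
    have hY0 : (fun ω => Real.exp (x * Y ω)) =ᵐ[μ] fun _ => (1 : ℝ) := by
      filter_upwards [hY] with ω hω
      have hz : Y ω = 0 := le_antisymm (hbz ▸ hω.2) (ha ▸ hω.1)
      simp [hz]
    have h2 : μ[fun ω => Real.exp (x * Y ω)|G] =ᵐ[μ] fun _ => (1 : ℝ) := by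
      refine (condExp_congr_ae hY0).trans ?_
      rw [condExp_const hG (1 : ℝ)]
    filter_upwards [h2] with ω hω
    rw [hω]
    simp only [Real.log_one]
    positivity
  · -- a < b
    have hba : (0:ℝ) < b - a := by linarith
    set p : ℝ := -a / (b - a) with hp
    have hp0 : 0 ≤ p := div_nonneg (by linarith) hba.le
    have hp1 : p ≤ 1 := by rw [div_le_one hba]; linarith
    set t : ℝ := x * (b - a) with ht
    set c1 : ℝ := (b * Real.exp (x * a) - a * Real.exp (x * b)) / (b - a) with hc1
    set c2 : ℝ := (Real.exp (x * b) - Real.exp (x * a)) / (b - a) with hc2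
    -- pointwise convexity bound
    have hpt : ∀ ω, Y ω ∈ Set.Icc a b → Real.exp (x * Y ω) ≤ c1 + c2 * Y ω := by
      intro ω hω
      set s1 : ℝ := (b - Y ω) / (b - a) with hs1
      set s2 : ℝ := (Y ω - a) / (b - a) with hs2
      have hs1n : 0 ≤ s1 := div_nonneg (by linarith [hω.2]) hba.le
      have hs2n : 0 ≤ s2 := div_nonneg (by linarith [hω.1]) hba.le
      have hsum : s1 + s2 = 1 := by rw [hs1, hs2]; field_simp; ring
      have hconv := convexOn_exp.2 (Set.mem_univ (x * a)) (Set.mem_univ (x * b)) hs1n hs2n hsum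
      have heq1 : s1 • (x * a) + s2 • (x * b) = x * Y ω := by
        simp only [smul_eq_mul, hs1, hs2]; field_simp; ring
      have heq2 : s1 • Real.exp (x * a) + s2 • Real.exp (x * b) = c1 + c2 * Y ω := by
        simp only [smul_eq_mul, hs1, hs2, hc1, hc2]; field_simp; ring
      rw [heq1, heq2] at hconv
      exact hconv
    have hRint : Integrable (fun ω => c1 + c2 * Y ω) μ :=
      (integrable_const c1).add (hYint.const_mul c2)
    have key1 : μ[fun ω => Real.exp (x * Y ω)|G] ≤ᵐ[μ] μ[fun ω => c1 + c2 * Y ω|G] :=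
      condExp_mono hint hRint (by filter_upwards [hY] with ω hω using hpt ω hω)
    have key2 : μ[fun ω => c1 + c2 * Y ω|G] =ᵐ[μ] fun _ => c1 := by
      have h1 : (fun ω => c1 + c2 * Y ω) = (fun _ => c1) + (c2 • Y) := by
        funext ω; simp [mul_comm]
      rw [h1]
      calc μ[(fun _ => c1) + c2 • Y|G]
          =ᵐ[μ] μ[fun _ => c1|G] + μ[c2 • Y|G] :=
            condExp_add (integrable_const c1) (hYint.smul c2) G
        _ =ᵐ[μ] (fun _ => c1) + c2 • μ[Y|G] := by
            rw [condExp_const hG c1]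
            exact Filter.EventuallyEq.add (Filter.EventuallyEq.refl _ _) (condExp_smul c2 Y G)
        _ =ᵐ[μ] fun _ => c1 := by
            filter_upwards [hcond] with ω hω
            simp [hω]
    have hnn : 0 ≤ᵐ[μ] μ[fun ω => Real.exp (x * Y ω)|G] :=
      condExp_nonneg (Filter.Eventually.of_forall fun ω => (Real.exp_pos _).le)
    -- bound on c1
    have hc1le : c1 ≤ Real.exp ((b - a) ^ 2 * x ^ 2 / 8) := by
      have hA := hoeffding_aux hp0 hp1 t
      have hc1eq : c1 = Real.exp (x * a) * ((1 - p) + p * Real.exp t) := by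
        have hxb : x * b = x * a + t := by rw [ht]; ring
        rw [hc1, hxb, Real.exp_add, hp]
        field_simp
        ring
      have harg : x * a + (p * t + t ^ 2 / 8) = (b - a) ^ 2 * x ^ 2 / 8 := by
        rw [hp, ht]; field_simp; ring
      calc c1 = Real.exp (x * a) * ((1 - p) + p * Real.exp t) := hc1eq
        _ ≤ Real.exp (x * a) * Real.exp (p * t + t ^ 2 / 8) := by
            apply mul_le_mul_of_nonneg_left hA (Real.exp_pos _).le
        _ = Real.exp ((b - a) ^ 2 * x ^ 2 / 8) := by rw [← Real.exp_add, harg]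
    filter_upwards [key1, key2, hnn] with ω h1 h2 h3
    have hv : (μ[fun ω => Real.exp (x * Y ω)|G]) ω ≤ c1 := by
      have := h1.trans (le_of_eq h2)
      simpa using this
    rcases eq_or_lt_of_le (by simpa using h3 :
        (0:ℝ) ≤ (μ[fun ω => Real.exp (x * Y ω)|G]) ω) with h0 | h0
    · rw [← h0, Real.log_zero]; positivity
    · rw [Real.log_le_iff_le_exp h0]
      exact hv.trans hc1le
end

section
/- Let (f^θ)_{θ∈Θ} be a uniformly equicontinuous family of non-decreasing continuous functions on [0,1], and let (X_n^θ) be random non-decreasing càdlàg functions such that for each t ∈ [0,1], sup_{θ∈Θ} P(|X_n^θ(t) − f^θ(t)| > ε) → 0 as n → ∞ for all ε > 0. Then sup_{θ∈Θ} P(sup_{t∈[0,1]} |X_n^θ(t) − f^θ(t)| > ε) → 0 as n → ∞ for all ε > 0. -/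
open MeasureTheory Filter

set_option maxHeartbeats 1000000 in
/-- Uniform-in-`θ` stochastic Pólya/Dini: let `(f θ)` be a uniformly equicontinuous family of
non-decreasing continuous functions on `[0,1]` and let `X n θ` be random non-decreasing
functions.  If for each `t ∈ [0,1]` the convergence `X n θ (t) → f θ (t)` holds in probability
uniformly over `θ`, then the uniform distance `sup_{t ∈ [0,1]} |X n θ (t) − f θ (t)|` converges
to zero in probability uniformly over `θ`. -/
theorem monotone_pointwise_to_uniform_in_probability_uniform
    {Ω Θ : Type*} {mΩ : MeasurableSpace Ω} {μ : Measure Ω} [IsProbabilityMeasure μ]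
    (X : ℕ → Θ → Ω → ℝ → ℝ) (f : Θ → ℝ → ℝ)
    (hX_mono : ∀ n θ ω, MonotoneOn (X n θ ω) (Set.Icc 0 1))
    (hf_mono : ∀ θ, MonotoneOn (f θ) (Set.Icc 0 1))
    (hf_cont : ∀ θ, ContinuousOn (f θ) (Set.Icc 0 1))
    -- uniform equicontinuity over Θ
    (hf_equi : ∀ ε : ℝ, 0 < ε → ∃ δ : ℝ, 0 < δ ∧ ∀ θ, ∀ s ∈ Set.Icc (0 : ℝ) 1,
      ∀ t ∈ Set.Icc (0 : ℝ) 1, |t - s| < δ → |f θ t - f θ s| < ε)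
    -- pointwise convergence in probability, uniformly over Θ
    (hpt : ∀ t ∈ Set.Icc (0 : ℝ) 1, ∀ ε : ℝ, 0 < ε →
      Tendsto (fun n => ⨆ θ, μ {ω | ε < |X n θ ω t - f θ t|}) atTop (nhds 0)) :
    ∀ ε : ℝ, 0 < ε →
      Tendsto (fun n => ⨆ θ, μ {ω | ∃ t ∈ Set.Icc (0 : ℝ) 1, ε < |X n θ ω t - f θ t|})
        atTop (nhds 0) := by
  intro ε hε
  obtain ⟨δ, hδ, hδf⟩ := hf_equi (ε / 2) (by linarith)
  obtain ⟨m, hm⟩ := exists_nat_one_div_lt hδ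
  set N : ℕ := m + 1 with hNdef
  have hN0 : (0 : ℝ) < N := by positivity
  have hNδ : 1 / (N : ℝ) < δ := by
    have : ((N : ℝ)) = (m : ℝ) + 1 := by push_cast [hNdef]; ring
    rw [this]; exact hm
  -- deterministic key step
  have key : ∀ n θ ω,
      (∀ i ∈ Finset.range (N + 1), ¬ (ε / 2 < |X n θ ω ((i : ℝ) / N) - f θ ((i : ℝ) / N)|)) →
      ∀ t ∈ Set.Icc (0 : ℝ) 1, ¬ (ε < |X n θ ω t - f θ t|) := by
    intro n θ ω hgrid t ht
    obtain ⟨ht0, ht1⟩ := ht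
    have htN0 : (0 : ℝ) ≤ t * N := by positivity
    have h0 : (0 : ℤ) ≤ ⌊t * (N : ℝ)⌋ := Int.floor_nonneg.2 htN0
    set i : ℕ := (⌊t * (N : ℝ)⌋).toNat with hidef
    have hcast : ((i : ℝ)) = ((⌊t * (N : ℝ)⌋ : ℤ) : ℝ) := by
      rw [hidef]; exact_mod_cast Int.toNat_of_nonneg h0
    have hfl : (i : ℝ) ≤ t * N := by rw [hcast]; exact Int.floor_le _
    have hfl2 : t * N < (i : ℝ) + 1 := by rw [hcast]; exact Int.lt_floor_add_one _
    have hiNR : (i : ℝ) ≤ N := le_trans hfl (by nlinarith)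
    have hiN : i ≤ N := by exact_mod_cast hiNR
    set j : ℕ := min (i + 1) N with hjdef
    have hjN : j ≤ N := min_le_right _ _
    have hji : (j : ℝ) ≤ (i : ℝ) + 1 := by
      have : j ≤ i + 1 := min_le_left _ _
      exact_mod_cast this
    have hti : (i : ℝ) / N ≤ t := by rw [div_le_iff₀ hN0]; linarith
    have htj : t ≤ (j : ℝ) / N := by
      rcases le_or_gt (i + 1) N with h | h
      · have hjeq : j = i + 1 := min_eq_left h
        rw [hjeq, le_div_iff₀ hN0]
        exact_mod_cast hfl2.le
      · have hieq : i = N := le_antisymm hiN (by omega)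
        have hjeq : j = N := min_eq_right (by omega)
        have ht1' : 1 ≤ t := by
          rw [hieq] at hfl; nlinarith
        rw [hjeq, div_self (ne_of_gt hN0)]; linarith
    have hmemi : (i : ℝ) / N ∈ Set.Icc (0 : ℝ) 1 :=
      ⟨by positivity, by rw [div_le_one hN0]; exact hiNR⟩
    have hmemj : (j : ℝ) / N ∈ Set.Icc (0 : ℝ) 1 :=
      ⟨by positivity, by rw [div_le_one hN0]; exact_mod_cast hjN⟩
    have hmemt : t ∈ Set.Icc (0 : ℝ) 1 := ⟨ht0, ht1⟩
    -- distances to grid points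
    have hdisti : |(i : ℝ) / N - t| < δ := by
      have h2 : t < ((i : ℝ) + 1) / N := by rw [lt_div_iff₀ hN0]; linarith
      have h3 : ((i : ℝ) + 1) / N = (i : ℝ) / N + 1 / N := by ring
      rw [abs_lt]; constructor <;> [linarith; linarith]
    have hdistj : |(j : ℝ) / N - t| < δ := by
      rw [abs_lt]; constructor
      · nlinarith [htj]
      · have hjt : (j : ℝ) / N - t ≤ 1 / N := by
          rw [div_sub' (ne_of_gt hN0), div_le_div_iff₀ hN0 hN0]
          nlinarith
        linarith
    -- equicontinuity bounds
    have heqi : |f θ ((i : ℝ) / N) - f θ t| < ε / 2 := hδf θ t hmemt _ hmemi hdisti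
    have heqj : |f θ ((j : ℝ) / N) - f θ t| < ε / 2 := hδf θ t hmemt _ hmemj hdistj
    -- grid bounds
    have hgi : |X n θ ω ((i : ℝ) / N) - f θ ((i : ℝ) / N)| ≤ ε / 2 :=
      not_lt.1 (hgrid i (Finset.mem_range.2 (by omega)))
    have hgj : |X n θ ω ((j : ℝ) / N) - f θ ((j : ℝ) / N)| ≤ ε / 2 :=
      not_lt.1 (hgrid j (Finset.mem_range.2 (by omega)))
    -- monotonicity
    have hm1 : X n θ ω ((i : ℝ) / N) ≤ X n θ ω t := hX_mono n θ ω hmemi hmemt hti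
    have hm2 : X n θ ω t ≤ X n θ ω ((j : ℝ) / N) := hX_mono n θ ω hmemt hmemj htj
    rw [not_lt, abs_le]
    rw [abs_le] at hgi hgj
    rw [abs_lt] at heqi heqj
    constructor <;> [nlinarith [hgi.1, heqi.2]; nlinarith [hgj.2, heqj.1]]
  -- measure bound
  have bound : ∀ n, (⨆ θ, μ {ω | ∃ t ∈ Set.Icc (0 : ℝ) 1, ε < |X n θ ω t - f θ t|})
      ≤ ∑ i ∈ Finset.range (N + 1),
          ⨆ θ, μ {ω | ε / 2 < |X n θ ω ((i : ℝ) / N) - f θ ((i : ℝ) / N)|} := by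
    intro n
    refine iSup_le fun θ => ?_
    calc μ {ω | ∃ t ∈ Set.Icc (0 : ℝ) 1, ε < |X n θ ω t - f θ t|}
        ≤ μ (⋃ i ∈ Finset.range (N + 1),
            {ω | ε / 2 < |X n θ ω ((i : ℝ) / N) - f θ ((i : ℝ) / N)|}) := by
          apply measure_mono
          intro ω hω
          obtain ⟨t, ht, hεt⟩ := hω
          by_contra hc
          simp only [Set.mem_iUnion, Set.mem_setOf_eq, not_exists] at hc
          exact key n θ ω (fun i hi => hc i hi) t ht hεt
      _ ≤ ∑ i ∈ Finset.range (N + 1),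
            μ {ω | ε / 2 < |X n θ ω ((i : ℝ) / N) - f θ ((i : ℝ) / N)|} :=
          measure_biUnion_finset_le _ _
      _ ≤ ∑ i ∈ Finset.range (N + 1),
            ⨆ θ, μ {ω | ε / 2 < |X n θ ω ((i : ℝ) / N) - f θ ((i : ℝ) / N)|} :=
          Finset.sum_le_sum fun i _ => le_iSup
            (fun θ => μ {ω | ε / 2 < |X n θ ω ((i : ℝ) / N) - f θ ((i : ℝ) / N)|}) θ
  -- the bound tends to zero
  have htend : Tendsto (fun n => ∑ i ∈ Finset.range (N + 1),
      ⨆ θ, μ {ω | ε / 2 < |X n θ ω ((i : ℝ) / N) - f θ ((i : ℝ) / N)|}) atTop (nhds 0) := by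
    have h := tendsto_finset_sum (Finset.range (N + 1)) (fun i hi =>
      hpt ((i : ℝ) / N)
        ⟨by positivity, by
          rw [div_le_one hN0]
          exact_mod_cast Nat.le_of_lt_succ (Finset.mem_range.1 hi)⟩
        (ε / 2) (by linarith))
    simpa using h
  exact tendsto_of_tendsto_of_tendsto_of_le_of_le tendsto_const_nhds htend
    (fun n => zero_le) bound
end
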